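/- arXiv:1411.6322 — 8 statements merged into one kernel-verified Lean document; each statement's English description precedes it below -/
import Mathlib

section
/- For x ∈ Δ_n with support S of size k ≥ 2, the matrix T(A,x) is negative semidefinite if and only if yᵀAy ≤ 0 for every y ∈ R^n with Σ_i y_i = 0 and y_i = 0 whenever x_i = 0. Likewise, T(A,x) is negative definite if and only if yᵀAy < 0 for every nonzero such y. -/
/-!
The vectors `y` with `∑ i, y i = 0` supported on the support `{e 0, …, e m}` of `x` are exactly
the images `M *ᵥ z` of the injective matrix `M` whose columns are `δ_{e a} - δ_{e m}`
(`a < m`), and `T(A,x) = Mᵀ A M`. Hence `z ⬝ᵥ T(A,x) *ᵥ z = (M *ᵥ z) ⬝ᵥ A *ᵥ (M *ᵥ z)`, and both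
equivalences say that a quadratic form is (strictly) negative on a space and on its image under
a linear isomorphism.
-/

open Matrix

namespace Matrix

lemma dotProduct_transpose_mul_mul_mulVec {ι κ R : Type*} [Fintype ι] [Fintype κ]
    [CommSemiring R] (M : Matrix ι κ R) (A : Matrix ι ι R) (z : κ → R) :
    z ⬝ᵥ (Mᵀ * A * M) *ᵥ z = (M *ᵥ z) ⬝ᵥ A *ᵥ (M *ᵥ z) := by
  rw [← mulVec_mulVec, ← mulVec_mulVec, dotProduct_mulVec, vecMul_transpose]

end Matrix

section FaceTangentMatrix

variable {ι : Type*} (R : Type*) [DecidableEq ι] [CommRing R] {m : ℕ}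

def faceTangentMatrix (e : Fin (m + 1) → ι) : Matrix ι (Fin m) R :=
  of fun i a => (if i = e a.castSucc then 1 else 0) - if i = e (Fin.last m) then 1 else 0

variable {R} (e : Fin (m + 1) → ι) (z : Fin m → R)

lemma faceTangentMatrix_mulVec_apply (i : ι) :
    (faceTangentMatrix R e *ᵥ z) i =
      (∑ a, if i = e a.castSucc then z a else 0) - if i = e (Fin.last m) then ∑ a, z a else 0 := by
  simp [faceTangentMatrix, mulVec, dotProduct, sub_mul, Finset.sum_sub_distrib, ite_mul]

lemma sum_faceTangentMatrix_mulVec [Fintype ι] : ∑ i, (faceTangentMatrix R e *ᵥ z) i = 0 := by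
  simp only [faceTangentMatrix_mulVec_apply, Finset.sum_sub_distrib]
  rw [Finset.sum_comm]
  simp

lemma faceTangentMatrix_mulVec_apply_of_notMem {i : ι} (hi : i ∉ Set.range e) :
    (faceTangentMatrix R e *ᵥ z) i = 0 := by
  simp only [Set.mem_range, not_exists] at hi
  simp [faceTangentMatrix_mulVec_apply, fun a => Ne.symm (hi a)]

variable {e}

lemma faceTangentMatrix_mulVec_apply_castSucc (he : Function.Injective e) (a : Fin m) :
    (faceTangentMatrix R e *ᵥ z) (e a.castSucc) = z a := by
  simp [faceTangentMatrix_mulVec_apply, he.eq_iff]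

lemma faceTangentMatrix_mulVec_injective (he : Function.Injective e) :
    Function.Injective (faceTangentMatrix R e *ᵥ ·) := fun z z' h => funext fun a => by
  simpa only [faceTangentMatrix_mulVec_apply_castSucc _ he] using congrFun h (e a.castSucc)

lemma exists_faceTangentMatrix_mulVec_eq_iff [Fintype ι] (he : Function.Injective e)
    (y : ι → R) :
    (∃ z, faceTangentMatrix R e *ᵥ z = y) ↔ ∑ i, y i = 0 ∧ ∀ i ∉ Set.range e, y i = 0 := by
  constructor
  · rintro ⟨z, rfl⟩
    exact ⟨sum_faceTangentMatrix_mulVec e z,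
      fun i hi => faceTangentMatrix_mulVec_apply_of_notMem e z hi⟩
  · rintro ⟨hsum, hsupp⟩
    refine ⟨fun a => y (e a.castSucc), ?_⟩
    set d := y - faceTangentMatrix R e *ᵥ fun a => y (e a.castSucc)
    have hd : ∀ i ≠ e (Fin.last m), d i = 0 := by
      intro i hi
      by_cases hr : i ∈ Set.range e
      · obtain ⟨a, rfl⟩ := hr
        cases a using Fin.lastCases with
        | last => exact absurd rfl hi
        | cast a => simp [d, faceTangentMatrix_mulVec_apply_castSucc _ he]
      · simp [d, hsupp i hr, faceTangentMatrix_mulVec_apply_of_notMem e _ hr]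
    have hdsum : ∑ i, d i = 0 := by
      simp [d, Finset.sum_sub_distrib, hsum, sum_faceTangentMatrix_mulVec]
    rw [Fintype.sum_eq_single _ hd] at hdsum
    have hd0 : d = 0 := funext fun i => by
      by_cases hi : i = e (Fin.last m)
      · rw [hi, hdsum, Pi.zero_apply]
      · exact hd i hi
    exact (sub_eq_zero.mp hd0).symm

lemma transpose_faceTangentMatrix_mul_mul_apply [Fintype ι] (A : Matrix ι ι R) (a b : Fin m) :
    ((faceTangentMatrix R e)ᵀ * A * faceTangentMatrix R e) a b =
      A (e a.castSucc) (e b.castSucc) + A (e (Fin.last m)) (e (Fin.last m))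
        - A (e a.castSucc) (e (Fin.last m)) - A (e (Fin.last m)) (e b.castSucc) := by
  simp [faceTangentMatrix, mul_apply, sub_mul, mul_sub, Finset.sum_sub_distrib, ite_mul]
  ring

end FaceTangentMatrix

theorem transformed_matrix_negSemidef_iff_general {n m : ℕ} (A : Matrix (Fin n) (Fin n) ℝ)
    (x : Fin n → ℝ) (hx : x ∈ stdSimplex ℝ (Fin n))
    (e : Fin (m + 1) → Fin n) (he : Function.Injective e)
    (hsupp : ∀ i, 0 < x i ↔ i ∈ Set.range e)
    (B : Matrix (Fin m) (Fin m) ℝ)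
    (hB : ∀ a b : Fin m,
      B a b = A (e a.castSucc) (e b.castSucc) + A (e (Fin.last m)) (e (Fin.last m))
        - A (e a.castSucc) (e (Fin.last m)) - A (e (Fin.last m)) (e b.castSucc)) :
    ((∀ z : Fin m → ℝ, z ⬝ᵥ B.mulVec z ≤ 0) ↔
      (∀ y : Fin n → ℝ, (∑ i, y i) = 0 → (∀ i, x i = 0 → y i = 0) →
        y ⬝ᵥ A.mulVec y ≤ 0)) ∧
    ((∀ z : Fin m → ℝ, z ≠ 0 → z ⬝ᵥ B.mulVec z < 0) ↔
      (∀ y : Fin n → ℝ, y ≠ 0 → (∑ i, y i) = 0 → (∀ i, x i = 0 → y i = 0) →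
        y ⬝ᵥ A.mulVec y < 0)) := by
  set M := faceTangentMatrix ℝ e
  have hquad (z : Fin m → ℝ) : z ⬝ᵥ B *ᵥ z = (M *ᵥ z) ⬝ᵥ A *ᵥ (M *ᵥ z) := by
    rw [← dotProduct_transpose_mul_mul_mulVec]
    congr 2
    ext a b
    rw [hB, transpose_faceTangentMatrix_mul_mul_apply]
  have hzero (i : Fin n) : x i = 0 ↔ i ∉ Set.range e := by
    rw [← hsupp, not_lt, (hx.1 i).ge_iff_eq']
  have hface (y : Fin n → ℝ) :
      ((∑ i, y i) = 0 ∧ ∀ i, x i = 0 → y i = 0) ↔ ∃ z, M *ᵥ z = y := by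
    simp only [hzero]
    exact (exists_faceTangentMatrix_mulVec_eq_iff he y).symm
  have hne (z : Fin m → ℝ) : M *ᵥ z ≠ 0 ↔ z ≠ 0 :=
    (faceTangentMatrix_mulVec_injective he).ne_iff' (mulVec_zero M)
  refine ⟨⟨fun h y hs h0 => ?_, fun h z => ?_⟩, ⟨fun h y hy hs h0 => ?_, fun h z hz => ?_⟩⟩
  · obtain ⟨z, rfl⟩ := (hface y).1 ⟨hs, h0⟩
    exact hquad z ▸ h z
  · obtain ⟨hs, h0⟩ := (hface _).2 ⟨z, rfl⟩
    exact (hquad z).symm ▸ h _ hs h0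
  · obtain ⟨z, rfl⟩ := (hface y).1 ⟨hs, h0⟩
    exact hquad z ▸ h z ((hne z).1 hy)
  · obtain ⟨hs, h0⟩ := (hface _).2 ⟨z, rfl⟩
    exact (hquad z).symm ▸ h _ ((hne z).2 hz) hs h0

/-- for `x ∈ Δ_n` with support of size `k = m+1 ≥ 2`, the transformed matrix
`T(A,x)` is negative semidefinite iff `yᵀAy ≤ 0` for every `y` with `Σ_i y_i = 0` supported
on the support of `x`; and `T(A,x)` is negative definite iff `yᵀAy < 0` for every nonzero
such `y`. -/
theorem transformed_matrix_negSemidef_iff {n m : ℕ} (A : Matrix (Fin n) (Fin n) ℝ)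
    (hA : A.IsSymm)
    (x : Fin n → ℝ) (hx : x ∈ stdSimplex ℝ (Fin n))
    (hm : 1 ≤ m)
    (e : Fin (m + 1) → Fin n) (he : Function.Injective e)
    (hsupp : ∀ i, 0 < x i ↔ i ∈ Set.range e)
    (B : Matrix (Fin m) (Fin m) ℝ)
    (hB : ∀ a b : Fin m,
      B a b = A (e a.castSucc) (e b.castSucc) + A (e (Fin.last m)) (e (Fin.last m))
        - A (e a.castSucc) (e (Fin.last m)) - A (e (Fin.last m)) (e b.castSucc)) :
    ((∀ z : Fin m → ℝ, z ⬝ᵥ B.mulVec z ≤ 0) ↔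
      (∀ y : Fin n → ℝ, (∑ i, y i) = 0 → (∀ i, x i = 0 → y i = 0) →
        y ⬝ᵥ A.mulVec y ≤ 0)) ∧
    ((∀ z : Fin m → ℝ, z ≠ 0 → z ⬝ᵥ B.mulVec z < 0) ↔
      (∀ y : Fin n → ℝ, y ≠ 0 → (∑ i, y i) = 0 → (∀ i, x i = 0 → y i = 0) →
        y ⬝ᵥ A.mulVec y < 0)) :=
  transformed_matrix_negSemidef_iff_general A x hx e he hsupp B hB
end

section
/- If x ∈ Δ_n has support of size at least 2 and T(A,x) is negative semidefinite, then at most one index i in the support of x has a dominating diagonal entry (A_{ii} > A_{ij} for all j ≠ i). -/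
open Matrix

/-! The test vector `e i - e j` sums to zero and is supported on `{i, j}`, so negative
semidefiniteness on the support of `x` gives `A i i - A i j - A j i + A j j ≤ 0`, whereas two
dominating diagonal entries make each of `A i i - A i j` and `A j j - A j i` positive. -/

section TestVector

variable {ι R : Type*} [DecidableEq ι]

theorem sum_single_one_sub_single_one [Fintype ι] [AddCommGroup R] [One R] (i j : ι) :
    ∑ k, (Pi.single i 1 - Pi.single j 1 : ι → R) k = 0 := by
  simp only [Pi.sub_apply, Finset.sum_sub_distrib, Finset.sum_pi_single', Finset.mem_univ,
    if_true, sub_self]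

theorem single_one_sub_single_one_apply_of_ne [AddGroup R] [One R] {i j k : ι}
    (hi : k ≠ i) (hj : k ≠ j) : (Pi.single i 1 - Pi.single j 1 : ι → R) k = 0 := by
  simp [hi, hj]

theorem single_one_sub_single_one_dotProduct_mulVec [Fintype ι] [CommRing R] (A : Matrix ι ι R)
    (i j : ι) :
    (Pi.single i 1 - Pi.single j 1) ⬝ᵥ A *ᵥ (Pi.single i 1 - Pi.single j 1) =
      A i i - A i j - A j i + A j j := by
  simp only [mulVec_sub, mulVec_single_one, sub_dotProduct, dotProduct_sub,
    single_one_dotProduct, col_apply]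
  ring

end TestVector

theorem negSemidef_at_most_one_dominating_general {n : ℕ} (A : Matrix (Fin n) (Fin n) ℝ)
    (x : Fin n → ℝ)
    (hnsd : ∀ y : Fin n → ℝ, (∑ i, y i) = 0 → (∀ i, x i = 0 → y i = 0) →
      y ⬝ᵥ A.mulVec y ≤ 0) :
    ∀ i j, 0 < x i → 0 < x j →
      (∀ m, m ≠ i → A i m < A i i) → (∀ m, m ≠ j → A j m < A j j) → i = j := by
  intro i j hxi hxj hdi hdj
  by_contra hij
  have hsupp : ∀ k, x k = 0 → (Pi.single i 1 - Pi.single j 1 : Fin n → ℝ) k = 0 :=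
    fun k hk => single_one_sub_single_one_apply_of_ne (by rintro rfl; linarith)
      (by rintro rfl; linarith)
  have hquad := hnsd _ (sum_single_one_sub_single_one i j) hsupp
  rw [single_one_sub_single_one_dotProduct_mulVec] at hquad
  linarith [hdi j (Ne.symm hij), hdj i hij]

/-- if `x ∈ Δ_n` has support of size at least 2 and `T(A,x)` is negative
semidefinite (via the equivalent quadratic-form condition), then at most one index in the
support of `x` has a dominating diagonal entry. -/
theorem negSemidef_at_most_one_dominating {n : ℕ} (A : Matrix (Fin n) (Fin n) ℝ)
    (hA : A.IsSymm)
    (x : Fin n → ℝ) (hx : x ∈ stdSimplex ℝ (Fin n))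
    (hmix : 2 ≤ (Finset.univ.filter (fun i => 0 < x i)).card)
    (hnsd : ∀ y : Fin n → ℝ, (∑ i, y i) = 0 → (∀ i, x i = 0 → y i = 0) →
      y ⬝ᵥ A.mulVec y ≤ 0) :
    ∀ i j, 0 < x i → 0 < x j →
      (∀ m, m ≠ i → A i m < A i i) → (∀ m, m ≠ j → A j m < A j j) → i = j :=
  negSemidef_at_most_one_dominating_general A x hnsd
end

section
/- Let x ∈ Δ_n be the pure strategy with x_t = 1. If the diagonal entry A_{tt} is dominated (there exists t' with A_{t't} > A_{tt}), then the projected Jacobian of the replicator map at x has A_{t't}/A_{tt} > 1 as an eigenvalue, so x is linearly unstable. -/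
open Matrix

/-- at the pure fixed point `e_t`, if the diagonal entry `A_{tt}` is
dominated (`A_{t't} > A_{tt}` for some `t' ≠ t`), then the projected Jacobian
(which is diagonal with entries `A_{it}/A_{tt}`) has `A_{t't}/A_{tt} > 1` as an
eigenvalue, so `e_t` is linearly unstable. -/
theorem dominated_diag_pure_unstable {n : ℕ} (A : Matrix (Fin n) (Fin n) ℝ)
    (hA : A.IsSymm) (hApos : ∀ i j, 0 < A i j)
    (t t' : Fin n) (ht' : t' ≠ t) (hdom : A t t < A t' t)
    (J : Matrix {i : Fin n // i ≠ t} {i : Fin n // i ≠ t} ℝ)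
    (hJ : ∀ i j : {i : Fin n // i ≠ t},
      J i j = if i = j then A i t / A t t else 0) :
    1 < A t' t / A t t ∧ (A t' t / A t t) ∈ spectrum ℝ J := by
  have hAtt : 0 < A t t := hApos t t
  constructor
  · exact (one_lt_div hAtt).mpr hdom
  · rw [spectrum.mem_iff]
    intro hu
    rw [Matrix.isUnit_iff_isUnit_det] at hu
    have hdet : ((algebraMap ℝ (Matrix {i : Fin n // i ≠ t} {i : Fin n // i ≠ t} ℝ))
        (A t' t / A t t) - J).det = 0 := by
      apply Matrix.det_eq_zero_of_row_eq_zero ⟨t', ht'⟩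
      intro j
      simp only [Matrix.sub_apply, Matrix.algebraMap_matrix_apply, hJ]
      by_cases h : (⟨t', ht'⟩ : {i : Fin n // i ≠ t}) = j
      · subst h; simp
      · simp [h]
    rw [hdet] at hu
    exact hu.ne_zero rfl
end

section
/- Every stable fixed point r of the replicator dynamics is Nash stable: r is a symmetric Nash equilibrium of (A,A) and yᵀAy ≤ 0 for every y supported in the support of r with Σ_i y_i = 0. -/
/-!
Along any direction `y` that keeps `r + t • y` in the simplex for small `t > 0`, the local
maximality of `π(x) = xᵀAx` at `r` gives `2t yᵀAr + t² yᵀAy ≤ 0` for small `t > 0`, hence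
`yᵀAr ≤ 0`, and `yᵀAy ≤ 0` whenever `yᵀAr = 0`. The directions `eⱼ - r` give the Nash
inequalities. A direction `y` with `Σ yᵢ = 0` supported on `supp r` is feasible, and since
`(Ar)ᵢ = π(r)` on `supp r` it satisfies `yᵀAr = 0`, so `yᵀAy ≤ 0`.
-/

open Matrix Filter Topology Set

section QuadraticForm

variable {ι R : Type*} [Fintype ι] [CommRing R]

lemma Matrix.IsSymm.dotProduct_mulVec_comm {A : Matrix ι ι R} (hA : A.IsSymm) (x y : ι → R) :
    x ⬝ᵥ A *ᵥ y = y ⬝ᵥ A *ᵥ x := by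
  rw [dotProduct_mulVec, ← mulVec_transpose, hA.eq, dotProduct_comm]

lemma Matrix.IsSymm.dotProduct_mulVec_add_smul {A : Matrix ι ι R} (hA : A.IsSymm)
    (r y : ι → R) (t : R) :
    (r + t • y) ⬝ᵥ A *ᵥ (r + t • y) =
      r ⬝ᵥ A *ᵥ r + 2 * t * (y ⬝ᵥ A *ᵥ r) + t ^ 2 * (y ⬝ᵥ A *ᵥ y) := by
  simp only [mulVec_add, mulVec_smul, dotProduct_add, add_dotProduct, smul_dotProduct,
    dotProduct_smul, smul_eq_mul, hA.dotProduct_mulVec_comm r y]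
  ring

lemma dotProduct_eq_zero_of_sum_eq_zero {y v : ι → R} {c : R} (hsum : ∑ i, y i = 0)
    (hv : ∀ i, y i ≠ 0 → v i = c) : y ⬝ᵥ v = 0 := by
  calc y ⬝ᵥ v = ∑ i, y i * c := by
        refine Finset.sum_congr rfl fun i _ => ?_
        by_cases hyi : y i = 0
        · simp [hyi]
        · rw [hv i hyi]
    _ = 0 := by rw [← Finset.sum_mul, hsum, zero_mul]

end QuadraticForm

lemma nonpos_of_eventually_mul_add_mul_sq_nonpos {a b : ℝ}
    (h : ∀ᶠ t in 𝓝[>] (0 : ℝ), a * t + b * t ^ 2 ≤ 0) : a ≤ 0 ∧ (a = 0 → b ≤ 0) := by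
  have hpos : ∀ᶠ t in 𝓝[>] (0 : ℝ), 0 < t := self_mem_nhdsWithin
  constructor
  · have hlim : Tendsto (fun t => a + b * t) (𝓝 0) (𝓝 a) :=
      (show Continuous fun t : ℝ => a + b * t by fun_prop).tendsto' 0 a (by simp)
    refine le_of_tendsto (hlim.mono_left (nhdsWithin_le_nhds (s := Ioi 0))) ?_
    filter_upwards [h, hpos] with t ht htpos
    have : (a + b * t) * t ≤ 0 := by linarith
    exact nonpos_of_mul_nonpos_left this htpos
  · rintro rfl
    obtain ⟨t, ht, htpos⟩ := (h.and hpos).exists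
    have : b * t ^ 2 ≤ 0 := by linarith
    exact nonpos_of_mul_nonpos_left this (by positivity)

lemma IsLocalMaxOn.eventually_le_add_smul {E β : Type*} [TopologicalSpace E] [AddCommGroup E]
    [Module ℝ E] [ContinuousAdd E] [ContinuousSMul ℝ E] [Preorder β] {f : E → β} {s : Set E}
    {r y : E} (hmax : IsLocalMaxOn f s r) (hs : ∀ᶠ t in 𝓝[>] (0 : ℝ), r + t • y ∈ s) :
    ∀ᶠ t in 𝓝[>] (0 : ℝ), f (r + t • y) ≤ f r := by
  have hcont : Tendsto (fun t : ℝ => r + t • y) (𝓝 0) (𝓝 r) :=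
    (show Continuous fun t : ℝ => r + t • y by fun_prop).tendsto' 0 r (by simp)
  exact (tendsto_nhdsWithin_iff.2 ⟨hcont.mono_left nhdsWithin_le_nhds, hs⟩).eventually hmax

lemma Matrix.IsSymm.dotProduct_mulVec_nonpos_of_isLocalMaxOn {ι : Type*} [Fintype ι]
    {A : Matrix ι ι ℝ} (hA : A.IsSymm) {s : Set (ι → ℝ)} {r y : ι → ℝ}
    (hmax : IsLocalMaxOn (fun x => x ⬝ᵥ A *ᵥ x) s r)
    (hs : ∀ᶠ t in 𝓝[>] (0 : ℝ), r + t • y ∈ s) :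
    y ⬝ᵥ A *ᵥ r ≤ 0 ∧ (y ⬝ᵥ A *ᵥ r = 0 → y ⬝ᵥ A *ᵥ y ≤ 0) := by
  have h : ∀ᶠ t in 𝓝[>] (0 : ℝ), (2 * (y ⬝ᵥ A *ᵥ r)) * t + (y ⬝ᵥ A *ᵥ y) * t ^ 2 ≤ 0 := by
    filter_upwards [hmax.eventually_le_add_smul hs] with t ht
    rw [hA.dotProduct_mulVec_add_smul] at ht
    linarith
  obtain ⟨h₁, h₂⟩ := nonpos_of_eventually_mul_add_mul_sq_nonpos h
  exact ⟨by linarith, fun h₀ => h₂ (by rw [h₀, mul_zero])⟩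

section StdSimplex

variable {ι : Type*} [Fintype ι] {r : ι → ℝ}

lemma eventually_add_smul_sub_mem_stdSimplex (hr : r ∈ stdSimplex ℝ ι) {x : ι → ℝ}
    (hx : x ∈ stdSimplex ℝ ι) : ∀ᶠ t in 𝓝[>] (0 : ℝ), r + t • (x - r) ∈ stdSimplex ℝ ι := by
  filter_upwards [Ioo_mem_nhdsGT one_pos] with t ht
  exact (convex_stdSimplex ℝ ι).add_smul_sub_mem hr hx (Ioo_subset_Icc_self ht)

lemma eventually_add_smul_mem_stdSimplex (hr : r ∈ stdSimplex ℝ ι) {y : ι → ℝ}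
    (hsum : ∑ i, y i = 0) (hsupp : ∀ i, r i = 0 → y i = 0) :
    ∀ᶠ t in 𝓝 (0 : ℝ), r + t • y ∈ stdSimplex ℝ ι := by
  have hnonneg : ∀ i, ∀ᶠ t in 𝓝 (0 : ℝ), 0 ≤ r i + t * y i := by
    intro i
    rcases (hr.1 i).eq_or_lt with hri | hri
    · exact Eventually.of_forall fun t => by simp [← hri, hsupp i hri.symm]
    · have hlim : Tendsto (fun t : ℝ => r i + t * y i) (𝓝 0) (𝓝 (r i)) :=
        (show Continuous fun t : ℝ => r i + t * y i by fun_prop).tendsto' 0 (r i) (by simp)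
      exact (hlim.eventually (eventually_gt_nhds hri)).mono fun t ht => ht.le
  filter_upwards [eventually_all.2 hnonneg] with t ht
  refine ⟨ht, ?_⟩
  simp only [Pi.add_apply, Pi.smul_apply, smul_eq_mul, Finset.sum_add_distrib,
    ← Finset.mul_sum, hsum, mul_zero, add_zero, hr.2]

end StdSimplex

theorem stable_fixed_point_is_nashStable_general {n : ℕ} (A : Matrix (Fin n) (Fin n) ℝ)
    (hA : A.IsSymm)
    (r : Fin n → ℝ) (hr : r ∈ stdSimplex ℝ (Fin n))
    (hfix : ∀ i, 0 < r i → A.mulVec r i = r ⬝ᵥ A.mulVec r)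
    (hstable : IsLocalMaxOn (fun x : Fin n → ℝ => x ⬝ᵥ A.mulVec x)
      (stdSimplex ℝ (Fin n)) r) :
    (∀ i, 0 < r i → ∀ j, A.mulVec r j ≤ A.mulVec r i) ∧
    (∀ y : Fin n → ℝ, (∑ i, y i) = 0 → (∀ i, r i = 0 → y i = 0) →
      y ⬝ᵥ A.mulVec y ≤ 0) := by
  refine ⟨fun i hi j => ?_, fun y hsum hsupp => ?_⟩
  · have hdir := (hA.dotProduct_mulVec_nonpos_of_isLocalMaxOn hstable
      (eventually_add_smul_sub_mem_stdSimplex hr (single_mem_stdSimplex ℝ j))).1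
    rw [sub_dotProduct, single_one_dotProduct, ← hfix i hi] at hdir
    linarith
  · have hyr : y ⬝ᵥ A *ᵥ r = 0 := dotProduct_eq_zero_of_sum_eq_zero hsum fun i hyi =>
      hfix i ((hr.1 i).lt_of_ne fun h => hyi (hsupp i h.symm))
    exact (hA.dotProduct_mulVec_nonpos_of_isLocalMaxOn hstable
      (nhdsWithin_le_nhds (eventually_add_smul_mem_stdSimplex hr hsum hsupp))).2 hyr

/-- every stable fixed point `r` of the replicator dynamics (equivalently,
by Lyubich's characterization, a local maximum of `π(x) = xᵀAx` on the simplex which is a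
fixed point) is Nash stable: it is a symmetric Nash equilibrium of `(A,A)` and
`yᵀAy ≤ 0` for every `y` supported on the support of `r` with `Σ_i y_i = 0`. -/
theorem stable_fixed_point_is_nashStable {n : ℕ} (A : Matrix (Fin n) (Fin n) ℝ)
    (hA : A.IsSymm) (hApos : ∀ i j, 0 < A i j)
    (r : Fin n → ℝ) (hr : r ∈ stdSimplex ℝ (Fin n))
    (hfix : ∀ i, 0 < r i → A.mulVec r i = r ⬝ᵥ A.mulVec r)
    (hstable : IsLocalMaxOn (fun x : Fin n → ℝ => x ⬝ᵥ A.mulVec x)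
      (stdSimplex ℝ (Fin n)) r) :
    (∀ i, 0 < r i → ∀ j, A.mulVec r j ≤ A.mulVec r i) ∧
    (∀ y : Fin n → ℝ, (∑ i, y i) = 0 → (∀ i, r i = 0 → y i = 0) →
      y ⬝ᵥ A.mulVec y ≤ 0) :=
  stable_fixed_point_is_nashStable_general A hA r hr hfix hstable
end

section
/- If r is a local maximum of π(x) = xᵀAx on the simplex Δ_n, then yᵀAy ≤ 0 for every vector y with Σ_i y_i = 0 and y_i = 0 whenever r_i = 0. -/
open Matrix Filter Topology

/-- if `r` is a local maximum of `π(x) = xᵀAx` on the simplex `Δ_n`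
(and `(Ar)_i = rᵀAr` on the support of `r`), then `yᵀAy ≤ 0` for every `y` with
`Σ_i y_i = 0` and `y_i = 0` whenever `r_i = 0`. -/
theorem localMax_quadratic_nonpos {n : ℕ} (A : Matrix (Fin n) (Fin n) ℝ)
    (hA : A.IsSymm)
    (r : Fin n → ℝ) (hr : r ∈ stdSimplex ℝ (Fin n))
    (hfix : ∀ i, 0 < r i → A.mulVec r i = r ⬝ᵥ A.mulVec r)
    (hmax : IsLocalMaxOn (fun x : Fin n → ℝ => x ⬝ᵥ A.mulVec x)
      (stdSimplex ℝ (Fin n)) r) :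
    ∀ y : Fin n → ℝ, (∑ i, y i) = 0 → (∀ i, r i = 0 → y i = 0) →
      y ⬝ᵥ A.mulVec y ≤ 0 := by
  intro y hsum hsupp
  set f : (Fin n → ℝ) → ℝ := fun x => x ⬝ᵥ A.mulVec x with hf
  set q : ℝ := y ⬝ᵥ A.mulVec y with hq
  -- cross term vanishes
  have hcross : y ⬝ᵥ A.mulVec r = 0 := by
    have hterm : ∀ i, y i * A.mulVec r i = y i * (r ⬝ᵥ A.mulVec r) := by
      intro i
      rcases eq_or_lt_of_le (hr.1 i) with h | h
      · simp [hsupp i h.symm]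
      · rw [hfix i h]
    simp only [dotProduct]
    rw [Finset.sum_congr rfl (fun i _ => hterm i), ← Finset.sum_mul, hsum, zero_mul]
  have hcross' : r ⬝ᵥ A.mulVec y = 0 := by
    rw [Matrix.dotProduct_mulVec, ← Matrix.mulVec_transpose, hA.eq, dotProduct_comm]
    exact hcross
  have hexp : ∀ t : ℝ, f (r + t • y) = f r + t ^ 2 * q := by
    intro t
    simp only [hf, hq, Matrix.mulVec_add, Matrix.mulVec_smul, dotProduct_add,
      add_dotProduct, dotProduct_smul, smul_dotProduct, smul_eq_mul]
    rw [hcross, hcross']; ring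
  -- eventually in the simplex
  have hmem : ∀ᶠ t : ℝ in 𝓝 0, r + t • y ∈ stdSimplex ℝ (Fin n) := by
    have h1 : ∀ᶠ t : ℝ in 𝓝 0, ∀ i, 0 ≤ r i + t * y i := by
      rw [Filter.eventually_all]
      intro i
      rcases eq_or_lt_of_le (hr.1 i) with h | h
      · filter_upwards with t
        simp [hsupp i h.symm, ← h]
      · have hc : Continuous fun t : ℝ => r i + t * y i := by continuity
        have ht := hc.tendsto 0
        simp only [zero_mul, add_zero] at ht
        exact ht.eventually (eventually_ge_nhds h)
    filter_upwards [h1] with t ht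
    constructor
    · intro i; simpa using ht i
    · simp [Finset.sum_add_distrib, hr.2, ← Finset.mul_sum, hsum]
  -- eventually close to r
  have hcont : Tendsto (fun t : ℝ => r + t • y) (𝓝 0) (𝓝 r) := by
    have : Continuous fun t : ℝ => r + t • y := by continuity
    have h0 := this.tendsto 0
    simpa using h0
  obtain ⟨U, hUmem, hU⟩ := Filter.eventually_iff_exists_mem.mp hmax
  rw [mem_nhdsWithin] at hUmem
  obtain ⟨V, hVopen, hrV, hVU⟩ := hUmem
  have hVev : ∀ᶠ t : ℝ in 𝓝 0, r + t • y ∈ V :=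
    hcont.eventually (hVopen.mem_nhds hrV)
  have hle : ∀ᶠ t : ℝ in 𝓝 0, t ^ 2 * q ≤ 0 := by
    filter_upwards [hmem, hVev] with t htmem htV
    have := hU _ (hVU ⟨htV, htmem⟩)
    have h2 : f (r + t • y) ≤ f r := this
    rw [hexp t] at h2
    linarith
  obtain ⟨t, htq, htne⟩ :=
    ((hle.filter_mono nhdsWithin_le_nhds).and self_mem_nhdsWithin).exists
      (f := 𝓝[≠] (0 : ℝ))
  have htne' : t ≠ 0 := htne
  have ht2 : 0 < t ^ 2 := by positivity
  nlinarith
end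

section
/- Let A be the 2n×2n matrix of the reduction (with blocks E', (k−1)I-type coupling, diagonal h, and −ε entries as specified). If the graph G has a clique of size at least k, and S = {v_1,...,v_m} is a maximal clique containing it with m = |S| ≥ k, then the strategy p with p_i = 1/m for i ∈ [m] and p_i = 0 otherwise is a strict symmetric Nash equilibrium of (A,A): (Ap)_i = (m−1)/m for i ∈ [m], and (Ap)_j < (m−1)/m for all j ∉ [m]. -/
open Matrix

/-- The symmetric `2n × 2n` reduction matrix built from a graph `G` on `n` vertices:
entries `E'` in the top-left block (`1` for edges, `−h` for non-edges, `0` on the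
diagonal), `k−1` coupling entries at `|i−j| = n`, `h` on the bottom-right diagonal,
and `−ε` everywhere else. -/
def redMatrix (n k : ℕ) (G : SimpleGraph (Fin n)) [DecidableRel G.Adj] (h ε : ℝ) :
    Matrix (Fin (2 * n)) (Fin (2 * n)) ℝ := fun i j =>
  if hi : (i : ℕ) < n then
    if hj : (j : ℕ) < n then
      if (i : ℕ) = (j : ℕ) then 0
      else if G.Adj ⟨i, hi⟩ ⟨j, hj⟩ then 1 else -h
    else if (j : ℕ) = (i : ℕ) + n then (k : ℝ) - 1 else -ε
  else
    if hj : (j : ℕ) < n then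
      if (i : ℕ) = (j : ℕ) + n then (k : ℝ) - 1 else -ε
    else if (i : ℕ) = (j : ℕ) then h else -ε

/-! Against the uniform strategy `p` on the first `m` indices, row `i` pays the average of its
first `m` entries. A clique row averages `m - 1` ones and one zero. A vertex outside the maximal
clique misses some clique vertex and pays `-h`; row `n + i` collects `k - 1 ≤ m - 1` once and
`-ε` otherwise, which is strictly smaller because the universal vertex forces `m ≥ 2`; all other
rows pay only `-ε`. -/

open Finset

namespace Finset

variable {ι R : Type*} [DecidableEq ι] {s : Finset ι} {f : ι → R} {i : ι} {a b : R}

lemma sum_eq_add_card_sub_one_mul [Ring R] (hi : i ∈ s) (hfi : f i = a)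
    (hf : ∀ j ∈ s, j ≠ i → f j = b) : ∑ j ∈ s, f j = a + (#s - 1) * b := by
  rw [← add_sum_erase s f hi, hfi, ← cast_card_erase_of_mem hi, ← nsmul_eq_mul, ← sum_const]
  exact congrArg _ (sum_congr rfl fun j hj => hf j (mem_of_mem_erase hj) (ne_of_mem_erase hj))

lemma sum_le_add_card_sub_one_mul [Ring R] [PartialOrder R] [IsOrderedRing R] (hi : i ∈ s)
    (hfi : f i = a) (hf : ∀ j ∈ s, j ≠ i → f j ≤ b) : ∑ j ∈ s, f j ≤ a + (#s - 1) * b := by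
  rw [← add_sum_erase s f hi, hfi, ← cast_card_erase_of_mem hi, ← nsmul_eq_mul]
  gcongr
  exact sum_le_card_nsmul _ _ _ fun j hj => hf j (mem_of_mem_erase hj) (ne_of_mem_erase hj)

end Finset

lemma Matrix.mulVec_ite_const {ι κ R : Type*} [Fintype κ] [NonUnitalNonAssocSemiring R]
    (M : Matrix ι κ R) (P : κ → Prop) [DecidablePred P] (c : R) (i : ι) :
    (M *ᵥ fun j => if P j then c else 0) i = (∑ j with P j, M i j) * c := by
  simp [mulVec, dotProduct, sum_filter, sum_mul]

lemma SimpleGraph.two_le_card_of_forall_not_forall_adj {V : Type*} [Nontrivial V]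
    [DecidableEq V] {G : SimpleGraph V} {S : Finset V} (huniv : ∃ v, ∀ u, u ≠ v → G.Adj v u)
    (hmax : ∀ v ∉ S, ¬ ∀ u ∈ S, G.Adj v u) : 2 ≤ #S := by
  obtain ⟨v, hv⟩ := huniv
  have hvS : v ∈ S := by
    by_contra hvS
    exact hmax v hvS fun u hu => hv u (ne_of_mem_of_not_mem hu hvS)
  obtain ⟨w, hwv⟩ := exists_ne v
  by_contra! hS
  have hSv : S ⊆ {v} := fun u hu => mem_singleton.2 (card_le_one.1 (by omega) u hu v hvS)
  have hwS : w ∉ S := fun hw => hwv (mem_singleton.1 (hSv hw))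
  exact hmax w hwS fun u hu => mem_singleton.1 (hSv hu) ▸ (hv w hwv).symm

section redMatrix

variable {n k m : ℕ} {G : SimpleGraph (Fin n)} [DecidableRel G.Adj] {h ε : ℝ} {i j : Fin (2 * n)}

lemma redMatrix_self (hi : (i : ℕ) < n) : redMatrix n k G h ε i i = 0 := by
  simp [redMatrix, hi]

lemma redMatrix_of_adj (hi : (i : ℕ) < n) (hj : (j : ℕ) < n) (hij : i ≠ j)
    (hadj : G.Adj ⟨i, hi⟩ ⟨j, hj⟩) : redMatrix n k G h ε i j = 1 := by
  simp [redMatrix, hi, hj, Fin.val_ne_of_ne hij, hadj]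

lemma redMatrix_of_not_adj (hi : (i : ℕ) < n) (hj : (j : ℕ) < n) (hij : i ≠ j)
    (hadj : ¬ G.Adj ⟨i, hi⟩ ⟨j, hj⟩) : redMatrix n k G h ε i j = -h := by
  simp [redMatrix, hi, hj, Fin.val_ne_of_ne hij, hadj]

lemma redMatrix_le_one (hh : 0 ≤ h) (hi : (i : ℕ) < n) (hj : (j : ℕ) < n) :
    redMatrix n k G h ε i j ≤ 1 := by
  simp only [redMatrix, hi, hj, dif_pos]
  split_ifs <;> linarith

lemma redMatrix_of_val_eq_add (hij : (i : ℕ) = j + n) : redMatrix n k G h ε i j = k - 1 := by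
  have hj : (j : ℕ) < n := by omega
  simp [redMatrix, hij, hj]

lemma redMatrix_of_val_ne_add (hi : n ≤ (i : ℕ)) (hj : (j : ℕ) < n) (hij : (i : ℕ) ≠ j + n) :
    redMatrix n k G h ε i j = -ε := by
  simp [redMatrix, hj, hij, Nat.not_lt.2 hi]

lemma card_filter_val_lt_of_le (hmn : m ≤ n) : (#{j : Fin (2 * n) | (j : ℕ) < m} : ℝ) = m := by
  rw [Fin.card_filter_val_lt, min_eq_right (by omega)]

variable {S : Finset (Fin n)} (hS : ∀ u : Fin n, u ∈ S ↔ (u : ℕ) < m) (hmn : m ≤ n)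
include hS hmn

lemma sum_redMatrix_of_lt (hclique : G.IsClique (S : Set (Fin n))) (hi : (i : ℕ) < m) :
    ∑ j : Fin (2 * n) with j.val < m, redMatrix n k G h ε i j = m - 1 := by
  have hin : (i : ℕ) < n := by omega
  rw [sum_eq_add_card_sub_one_mul (mem_filter.2 ⟨mem_univ i, hi⟩) (redMatrix_self hin)
    (b := 1), card_filter_val_lt_of_le hmn, zero_add, mul_one]
  intro j hj hji
  have hjm : (j : ℕ) < m := (mem_filter.1 hj).2
  refine redMatrix_of_adj hin (by omega) (Ne.symm hji) (hclique ((hS _).2 hi) ((hS _).2 hjm) ?_)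
  simpa [Fin.ext_iff] using Fin.val_ne_of_ne (Ne.symm hji)

lemma sum_redMatrix_le_of_lt (hh : 0 ≤ h) (hmax : ∀ v ∉ S, ¬ ∀ u ∈ S, G.Adj v u)
    (hmj : m ≤ (j : ℕ)) (hjn : (j : ℕ) < n) :
    ∑ j' : Fin (2 * n) with j'.val < m, redMatrix n k G h ε j j' ≤ -h + (m - 1) := by
  have hvS : (⟨j, hjn⟩ : Fin n) ∉ S := fun hv => by have := (hS _).1 hv; simp at this; omega
  obtain ⟨u, huS, hnadj⟩ := not_forall₂.1 (hmax _ hvS)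
  have hum : (u : ℕ) < m := (hS u).1 huS
  let u' : Fin (2 * n) := Fin.castLE (by omega) u
  rw [← mul_one ((m : ℝ) - 1), ← card_filter_val_lt_of_le hmn]
  refine sum_le_add_card_sub_one_mul (i := u') (mem_filter.2 ⟨mem_univ _, hum⟩) ?_ ?_
  · exact redMatrix_of_not_adj hjn u.isLt (fun hju => by simp [u', Fin.ext_iff] at hju; omega) hnadj
  · exact fun j' hj' _ => redMatrix_le_one hh hjn (by have := (mem_filter.1 hj').2; omega)

omit hS in
lemma sum_redMatrix_of_lt_add (hnj : n ≤ (j : ℕ)) (hjm : (j : ℕ) < m + n) :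
    ∑ j' : Fin (2 * n) with j'.val < m, redMatrix n k G h ε j j' = (k - 1) + (m - 1) * -ε := by
  let j₀ : Fin (2 * n) := ⟨j - n, by omega⟩
  rw [← card_filter_val_lt_of_le hmn]
  refine sum_eq_add_card_sub_one_mul (i := j₀) (mem_filter.2 ⟨mem_univ _, by simp [j₀]; omega⟩)
    (redMatrix_of_val_eq_add (by simp [j₀]; omega)) fun j' hj' hne => ?_
  have := (mem_filter.1 hj').2
  exact redMatrix_of_val_ne_add hnj (by omega) fun h => hne (Fin.ext (by simp [j₀]; omega))

omit hS in
lemma sum_redMatrix_of_add_le (hmj : m + n ≤ (j : ℕ)) :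
    ∑ j' : Fin (2 * n) with j'.val < m, redMatrix n k G h ε j j' = m * -ε := by
  rw [sum_congr rfl fun j' hj' => redMatrix_of_val_ne_add (by omega)
    (by have := (mem_filter.1 hj').2; omega) (by have := (mem_filter.1 hj').2; omega),
    sum_const, nsmul_eq_mul, card_filter_val_lt_of_le hmn]

lemma sum_redMatrix_lt_of_le (hh : 0 < h) (hε : 0 < ε) (hmax : ∀ v ∉ S, ¬ ∀ u ∈ S, G.Adj v u)
    (hm : 2 ≤ m) (hkm : k ≤ m) (hmj : m ≤ (j : ℕ)) :
    ∑ j' : Fin (2 * n) with j'.val < m, redMatrix n k G h ε j j' < m - 1 := by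
  have hm' : (2 : ℝ) ≤ m := by exact_mod_cast hm
  have hkm' : (k : ℝ) ≤ m := by exact_mod_cast hkm
  rcases lt_or_ge (j : ℕ) n with hjn | hnj
  · linarith [sum_redMatrix_le_of_lt (k := k) (ε := ε) hS hmn hh.le hmax hmj hjn]
  rcases lt_or_ge (j : ℕ) (m + n) with hjm | hjm
  · rw [sum_redMatrix_of_lt_add hmn hnj hjm]
    nlinarith
  · rw [sum_redMatrix_of_add_le hmn hjm]
    nlinarith

end redMatrix

theorem clique_gives_strict_NE_general {n k m : ℕ} (G : SimpleGraph (Fin n))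
    [DecidableRel G.Adj]
    (huniv : ∃ v : Fin n, ∀ u, u ≠ v → G.Adj v u)
    (hkn : k < n - 1)
    (h ε : ℝ) (hh : (2 * n ^ 2 + 5 : ℝ) < h)
    (hε : 0 < ε ∧ ε ≤ 1 / (10 * n ^ 3))
    (S : Finset (Fin n)) (hclique : G.IsClique (S : Set (Fin n)))
    (hmax : ∀ v ∉ S, ¬ (∀ u ∈ S, G.Adj v u))
    (hm : S.card = m) (hkm : k ≤ m)
    (hS : ∀ i : Fin n, i ∈ S ↔ (i : ℕ) < m)
    (p : Fin (2 * n) → ℝ)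
    (hp : ∀ i : Fin (2 * n), p i = if (i : ℕ) < m then (m : ℝ)⁻¹ else 0) :
    (∀ i : Fin (2 * n), (i : ℕ) < m →
      (redMatrix n k G h ε).mulVec p i = ((m : ℝ) - 1) / m) ∧
    (∀ j : Fin (2 * n), ¬ (j : ℕ) < m →
      (redMatrix n k G h ε).mulVec p j < ((m : ℝ) - 1) / m) := by
  have hmn : m ≤ n := hm ▸ S.card_le_univ.trans_eq (Fintype.card_fin n)
  have : Nontrivial (Fin n) := Fin.nontrivial_iff_two_le.2 (by omega)
  have hm2 : 2 ≤ m := hm ▸ SimpleGraph.two_le_card_of_forall_not_forall_adj huniv hmax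
  have hm0 : (0 : ℝ) < m := by positivity
  obtain rfl : p = fun j : Fin (2 * n) => if (j : ℕ) < m then (m : ℝ)⁻¹ else 0 := funext hp
  simp only [mulVec_ite_const, ← div_eq_mul_inv]
  refine ⟨fun i hi => ?_, fun j hj => ?_⟩
  · rw [sum_redMatrix_of_lt hS hmn hclique hi]
  · exact div_lt_div_of_pos_right (sum_redMatrix_lt_of_le hS hmn (by nlinarith) hε.1 hmax hm2 hkm
      (not_lt.1 hj)) hm0

/-- if `G` has a clique of size at least `k` and `S = {v_1, …, v_m}`
(wlog the first `m` indices) is a maximal clique containing it, `m ≥ k`, then the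
strategy `p` uniform on `[m]` is a strict symmetric Nash equilibrium of the reduction
game: `(Ap)_i = (m−1)/m` for `i ∈ [m]` and `(Ap)_j < (m−1)/m` for `j ∉ [m]`. -/
theorem clique_gives_strict_NE {n k m : ℕ} (G : SimpleGraph (Fin n))
    [DecidableRel G.Adj]
    (huniv : ∃ v : Fin n, ∀ u, u ≠ v → G.Adj v u)
    (hk : 0 < k) (hkn : k < n - 1)
    (h ε : ℝ) (hh : (2 * n ^ 2 + 5 : ℝ) < h)
    (hε : 0 < ε ∧ ε ≤ 1 / (10 * n ^ 3))
    (S : Finset (Fin n)) (hclique : G.IsClique (S : Set (Fin n)))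
    (hmax : ∀ v ∉ S, ¬ (∀ u ∈ S, G.Adj v u))
    (hm : S.card = m) (hkm : k ≤ m)
    (hS : ∀ i : Fin n, i ∈ S ↔ (i : ℕ) < m)
    (p : Fin (2 * n) → ℝ)
    (hp : ∀ i : Fin (2 * n), p i = if (i : ℕ) < m then (m : ℝ)⁻¹ else 0) :
    (∀ i : Fin (2 * n), (i : ℕ) < m →
      (redMatrix n k G h ε).mulVec p i = ((m : ℝ) - 1) / m) ∧
    (∀ j : Fin (2 * n), ¬ (j : ℕ) < m →
      (redMatrix n k G h ε).mulVec p j < ((m : ℝ) - 1) / m) :=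
  clique_gives_strict_NE_general G huniv hkn h ε hh hε S hclique hmax hm hkm hS p hp
end

section
/- Let p be a symmetric Nash equilibrium of the game (A,A) from the reduction with support contained in [n] and support size at least 2. Then every index i in the 'strong support' SSP(p) = {i : p_i > 1/n²} has |SSP(p)| ≥ k, and the vertices corresponding to SSP(p) form a clique in G; hence G has a clique of size k. -/
/-!
Against `p`, the mirror strategy `i + n` earns at least `(k - 1) p_i - ε`, while a vertex
strategy `i` earns at most `1 - p_i`, and at most `1 - p_i - (h + 1) p_j` if `j` is a
non-neighbour of `i`. Every vertex in the support is a best response, so each weight is at most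
`(1 + ε) / k`, and two vertices of weight above `1 / n²` must be adjacent because `h` is huge.
The at most `n` weights below `1 / n²` carry mass at most `1 / n`, so the remaining mass
`≥ 1 - 1 / n` needs at least `k` heavy vertices.
-/

open Matrix

open Finset

def IsSymmNashEq {ι : Type*} [Fintype ι] (A : Matrix ι ι ℝ) (p : ι → ℝ) : Prop :=
  p ∈ stdSimplex ℝ ι ∧ ∀ i, 0 < p i → ∀ j, (A *ᵥ p) j ≤ (A *ᵥ p) i

section Simplex

variable {ι : Type*} [Fintype ι] {p a : ι → ℝ} {c : ℝ}

theorem sum_mul_le_add_sum_sub_mul (hp : p ∈ stdSimplex ℝ ι) (T : Finset ι)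
    (ha : ∀ j ∉ T, 0 < p j → a j ≤ c) :
    ∑ j, a j * p j ≤ c + ∑ j ∈ T, (a j - c) * p j := by
  classical
  have hrest : ∑ j ∈ Tᶜ, (a j - c) * p j ≤ 0 := by
    refine sum_nonpos fun j hj => ?_
    rcases (hp.1 j).eq_or_lt with hpj | hpj
    · simp [← hpj]
    · exact mul_nonpos_of_nonpos_of_nonneg (sub_nonpos.2 (ha j (mem_compl.1 hj) hpj)) hpj.le
  calc ∑ j, a j * p j = c * ∑ j, p j + ∑ j, (a j - c) * p j := by
        rw [mul_sum, ← sum_add_distrib]; congr 1 with j; ring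
    _ = c + (∑ j ∈ T, (a j - c) * p j + ∑ j ∈ Tᶜ, (a j - c) * p j) := by
        rw [hp.2, mul_one, sum_add_sum_compl]
    _ ≤ c + ∑ j ∈ T, (a j - c) * p j := by linarith

theorem add_sum_sub_mul_le_sum_mul (hp : p ∈ stdSimplex ℝ ι) (T : Finset ι)
    (ha : ∀ j ∉ T, 0 < p j → c ≤ a j) :
    c + ∑ j ∈ T, (a j - c) * p j ≤ ∑ j, a j * p j := by
  have := sum_mul_le_add_sum_sub_mul (a := -a) (c := -c) hp T fun j hj hpj =>
    neg_le_neg (ha j hj hpj)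
  have hneg : ∀ j, (-a j - -c) * p j = -((a j - c) * p j) := fun j => by ring
  simp only [Pi.neg_apply, neg_mul, hneg, sum_neg_distrib] at this
  linarith

theorem one_sub_card_mul_le_sum_filter (hp : p ∈ stdSimplex ℝ ι) {t : ℝ} (ht : 0 ≤ t) :
    1 - #{i | 0 < p i} * t ≤ ∑ i with t < p i, p i := by
  have hterm : ∀ i, p i ≤ (if t < p i then p i else 0) + (if 0 < p i then t else 0) := by
    intro i
    by_cases hti : t < p i
    · simpa [hti, ht.trans_lt hti] using ht
    · rcases (hp.1 i).eq_or_lt with hpi | hpi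
      · simp [← hpi]
      · simpa [hti, hpi] using le_of_not_gt hti
  have := sum_le_sum fun i (_ : i ∈ univ) => hterm i
  rw [hp.2, sum_add_distrib, ← sum_filter, ← sum_filter, sum_const, nsmul_eq_mul] at this
  linarith

end Simplex

theorem nat_le_of_mul_one_sub_inv_le {n k s : ℕ} {ε : ℝ} (hkn : k + 2 ≤ n) (hε0 : 0 ≤ ε)
    (hε : ε ≤ 1 / (10 * n ^ 3)) (h : k * (1 - 1 / n : ℝ) ≤ s * (1 + ε)) : k ≤ s := by
  by_contra! hs
  have hsk : (s : ℝ) + 1 ≤ k := by exact_mod_cast hs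
  have hkn' : (k : ℝ) + 2 ≤ n := by exact_mod_cast hkn
  have hn : (0 : ℝ) < n := by linarith [k.cast_nonneg (α := ℝ)]
  have hεn : ε * (10 * n ^ 3) ≤ 1 := (le_div_iff₀ (by positivity)).1 hε
  have hmul : (k : ℝ) * (n - 1) ≤ s * (1 + ε) * n := by
    have := mul_le_mul_of_nonneg_right h hn.le
    rwa [mul_assoc, sub_mul, one_div, inv_mul_cancel₀ hn.ne', one_mul] at this
  -- `n - k ≤ (k - 1) ε n ≤ ε n² < 1`, contradicting `k + 2 ≤ n`
  have hεn2 : ε * n ^ 2 < 1 := by nlinarith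
  nlinarith [mul_le_mul_of_nonneg_right hsk (by positivity : (0:ℝ) ≤ (1 + ε) * n)]

theorem SimpleGraph.exists_isNClique_of_le_card {n m k : ℕ} {G : SimpleGraph (Fin n)}
    (hnm : n ≤ m) {S : Finset (Fin m)} (hS : ∀ i ∈ S, (i : ℕ) < n)
    (hadj : ∀ i ∈ S, ∀ j ∈ S, i ≠ j → ∃ (hi : (i : ℕ) < n) (hj : (j : ℕ) < n),
      G.Adj ⟨i, hi⟩ ⟨j, hj⟩) (hk : k ≤ #S) :
    ∃ s : Finset (Fin n), G.IsNClique k s := by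
  classical
  set T : Finset (Fin n) := {v | Fin.castLE hnm v ∈ S}
  have hTS : T.map (Fin.castLEEmb hnm) = S := by
    ext i
    simp only [mem_map, mem_filter, mem_univ, true_and, T]
    refine ⟨fun ⟨v, hv, hvi⟩ => hvi ▸ hv, fun hi => ⟨⟨i, hS i hi⟩, hi, rfl⟩⟩
  have hT : G.IsClique (T : Set (Fin n)) := by
    intro u hu v hv huv
    obtain ⟨_, _, huv⟩ := hadj _ (mem_filter.1 hu).2 _ (mem_filter.1 hv).2
      ((Fin.castLE_injective hnm).ne huv)
    exact huv
  obtain ⟨t, htT, htk⟩ :=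
    exists_subset_card_eq (s := T) (hk.trans_eq (by rw [← hTS, card_map]))
  exact ⟨t, hT.subset (coe_subset.2 htT), htk⟩

namespace redMatrix

variable {n k : ℕ} {G : SimpleGraph (Fin n)} [DecidableRel G.Adj] {h ε : ℝ}

theorem apply_self {i : Fin (2 * n)} (hi : (i : ℕ) < n) : redMatrix n k G h ε i i = 0 := by
  simp [redMatrix, hi]

theorem apply_le_one (hh : -1 ≤ h) {i j : Fin (2 * n)} (hi : (i : ℕ) < n)
    (hj : (j : ℕ) < n) : redMatrix n k G h ε i j ≤ 1 := by
  simp only [redMatrix, hi, hj, dite_true]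
  split_ifs <;> linarith

theorem apply_of_not_adj {i j : Fin (2 * n)} (hi : (i : ℕ) < n) (hj : (j : ℕ) < n)
    (hij : i ≠ j) (hadj : ¬ G.Adj ⟨i, hi⟩ ⟨j, hj⟩) : redMatrix n k G h ε i j = -h := by
  simp [redMatrix, hi, hj, Fin.val_ne_of_ne hij, hadj]

theorem apply_shift_self {m : Fin (2 * n)} (hm : (m : ℕ) < n) :
    redMatrix n k G h ε ⟨m + n, by omega⟩ m = k - 1 := by
  simp [redMatrix, hm]

theorem apply_shift_of_ne {m j : Fin (2 * n)} (hm : (m : ℕ) < n) (hj : (j : ℕ) < n)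
    (hjm : j ≠ m) : redMatrix n k G h ε ⟨m + n, by omega⟩ j = -ε := by
  simp [redMatrix, hj, (Fin.val_ne_of_ne hjm).symm]

variable {p : Fin (2 * n) → ℝ}

theorem mulVec_le_one_sub (hh : -1 ≤ h) (hp : p ∈ stdSimplex ℝ (Fin (2 * n)))
    (hsupp : ∀ j, 0 < p j → (j : ℕ) < n) {i : Fin (2 * n)} (hi : (i : ℕ) < n) :
    (redMatrix n k G h ε *ᵥ p) i ≤ 1 - p i := by
  have := sum_mul_le_add_sum_sub_mul (a := redMatrix n k G h ε i) hp {i} fun j _ hpj =>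
    apply_le_one hh hi (hsupp j hpj)
  rw [sum_singleton, apply_self hi] at this
  simp only [mulVec, dotProduct]
  linarith

theorem mulVec_le_of_not_adj (hh : -1 ≤ h) (hp : p ∈ stdSimplex ℝ (Fin (2 * n)))
    (hsupp : ∀ j, 0 < p j → (j : ℕ) < n) {i j : Fin (2 * n)} (hi : (i : ℕ) < n)
    (hj : (j : ℕ) < n) (hij : i ≠ j) (hadj : ¬ G.Adj ⟨i, hi⟩ ⟨j, hj⟩) :
    (redMatrix n k G h ε *ᵥ p) i ≤ 1 - p i - (h + 1) * p j := by
  have := sum_mul_le_add_sum_sub_mul (a := redMatrix n k G h ε i) hp {i, j} fun l _ hpl =>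
    apply_le_one hh hi (hsupp l hpl)
  rw [sum_pair hij, apply_self hi, apply_of_not_adj hi hj hij hadj] at this
  simp only [mulVec, dotProduct]
  linarith

theorem sub_le_mulVec_shift (hε : 0 ≤ ε) (hp : p ∈ stdSimplex ℝ (Fin (2 * n)))
    (hsupp : ∀ j, 0 < p j → (j : ℕ) < n) {m : Fin (2 * n)} (hm : (m : ℕ) < n) :
    (k - 1) * p m - ε ≤ (redMatrix n k G h ε *ᵥ p) ⟨m + n, by omega⟩ := by
  have := add_sum_sub_mul_le_sum_mul (a := redMatrix n k G h ε ⟨m + n, by omega⟩) hp {m}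
    fun j hj hpj => (apply_shift_of_ne hm (hsupp j hpj) (mem_singleton.not.1 hj)).ge
  rw [sum_singleton, apply_shift_self hm] at this
  simp only [mulVec, dotProduct]
  nlinarith [hp.1 m]

end redMatrix

namespace IsSymmNashEq

variable {n k : ℕ} {G : SimpleGraph (Fin n)} [DecidableRel G.Adj] {h ε : ℝ}
  {p : Fin (2 * n) → ℝ}

theorem sub_le_mulVec_of_pos (hNE : IsSymmNashEq (redMatrix n k G h ε) p)
    (hsupp : ∀ j, 0 < p j → (j : ℕ) < n) (hε : 0 ≤ ε) {i : Fin (2 * n)} (hpi : 0 < p i) :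
    (k - 1) * p i - ε ≤ (redMatrix n k G h ε *ᵥ p) i :=
  (redMatrix.sub_le_mulVec_shift hε hNE.1 hsupp (hsupp i hpi)).trans (hNE.2 i hpi _)

theorem mul_le_one_add (hNE : IsSymmNashEq (redMatrix n k G h ε) p)
    (hsupp : ∀ j, 0 < p j → (j : ℕ) < n) (hε : 0 ≤ ε) (hh : -1 ≤ h) (i : Fin (2 * n)) :
    k * p i ≤ 1 + ε := by
  rcases (hNE.1.1 i).eq_or_lt with hpi | hpi
  · rw [← hpi]; linarith
  · have := (hNE.sub_le_mulVec_of_pos hsupp hε hpi).trans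
      (redMatrix.mulVec_le_one_sub hh hNE.1 hsupp (hsupp i hpi))
    linarith

theorem mul_le_one_add_of_not_adj (hNE : IsSymmNashEq (redMatrix n k G h ε) p)
    (hsupp : ∀ j, 0 < p j → (j : ℕ) < n) (hε : 0 ≤ ε) (hh : -1 ≤ h) {i j : Fin (2 * n)}
    (hpi : 0 < p i) (hi : (i : ℕ) < n) (hj : (j : ℕ) < n) (hij : i ≠ j)
    (hadj : ¬ G.Adj ⟨i, hi⟩ ⟨j, hj⟩) : (h + 1) * p j ≤ 1 + ε := by
  have := (hNE.sub_le_mulVec_of_pos hsupp hε hpi).trans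
    (redMatrix.mulVec_le_of_not_adj hh hNE.1 hsupp hi hj hij hadj)
  nlinarith [hNE.1.1 i]

theorem adj_of_inv_sq_lt (hNE : IsSymmNashEq (redMatrix n k G h ε) p)
    (hsupp : ∀ j, 0 < p j → (j : ℕ) < n) (hε0 : 0 ≤ ε) (hε1 : ε ≤ 1)
    (hh : 2 * (n : ℝ) ^ 2 < h) {i j : Fin (2 * n)} (hpi : 1 / (n : ℝ) ^ 2 < p i)
    (hpj : 1 / (n : ℝ) ^ 2 < p j) (hij : i ≠ j) :
    ∃ (hi : (i : ℕ) < n) (hj : (j : ℕ) < n), G.Adj ⟨i, hi⟩ ⟨j, hj⟩ := by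
  have hpi0 : 0 < p i := (by positivity : (0 : ℝ) ≤ 1 / n ^ 2).trans_lt hpi
  have hpj0 : 0 < p j := (by positivity : (0 : ℝ) ≤ 1 / n ^ 2).trans_lt hpj
  refine ⟨hsupp i hpi0, hsupp j hpj0, ?_⟩
  by_contra hadj
  have hle := hNE.mul_le_one_add_of_not_adj hsupp hε0 (by nlinarith) hpi0 _ _ hij hadj
  have hn : (0 : ℝ) < n := by have := hsupp i hpi0; exact_mod_cast (by omega : 0 < n)
  have : 2 < (h + 1) * p j :=
    calc (2 : ℝ) = 2 * n ^ 2 * (1 / n ^ 2) := by field_simp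
      _ < (h + 1) * p j := mul_lt_mul'' (by linarith) hpj (by positivity) (by positivity)
  linarith

theorem le_card_filter_inv_sq_lt (hNE : IsSymmNashEq (redMatrix n k G h ε) p)
    (hsupp : ∀ j, 0 < p j → (j : ℕ) < n) (hε0 : 0 ≤ ε) (hε : ε ≤ 1 / (10 * n ^ 3))
    (hh : -1 ≤ h) (hkn : k + 2 ≤ n) : k ≤ #{i | 1 / (n : ℝ) ^ 2 < p i} := by
  have hn : (0 : ℝ) < n := by exact_mod_cast (by omega : 0 < n)
  have hpos : (#{i | 0 < p i} : ℝ) ≤ n := by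
    have : #{i | 0 < p i} ≤ #{i : Fin (2 * n) | (i : ℕ) < n} :=
      card_le_card fun i hi => mem_filter.2 ⟨mem_univ i, hsupp i (mem_filter.1 hi).2⟩
    rw [Fin.card_filter_val_lt] at this
    exact_mod_cast this.trans (min_le_right _ _)
  have hlow : 1 - 1 / (n : ℝ) ≤ ∑ i with 1 / (n : ℝ) ^ 2 < p i, p i := by
    refine le_trans ?_ (one_sub_card_mul_le_sum_filter hNE.1 (by positivity))
    have : (#{i | 0 < p i} : ℝ) * (1 / n ^ 2) ≤ n * (1 / n ^ 2) := by gcongr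
    have e : (n : ℝ) * (1 / n ^ 2) = 1 / n := by field_simp
    linarith
  have hup : (k : ℝ) * ∑ i with 1 / (n : ℝ) ^ 2 < p i, p i
      ≤ #{i | 1 / (n : ℝ) ^ 2 < p i} * (1 + ε) := by
    rw [mul_sum, ← nsmul_eq_mul]
    exact sum_le_card_nsmul _ _ _ fun i _ => hNE.mul_le_one_add hsupp hε0 hh i
  exact nat_le_of_mul_one_sub_inv_le hkn hε0 hε
    ((mul_le_mul_of_nonneg_left hlow (Nat.cast_nonneg k)).trans hup)

end IsSymmNashEq

theorem NE_gives_clique_general {n k : ℕ} (G : SimpleGraph (Fin n)) [DecidableRel G.Adj]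
    (hkn : k < n - 1)
    (h ε : ℝ) (hh : (2 * n ^ 2 + 5 : ℝ) < h)
    (hε : 0 < ε ∧ ε ≤ 1 / (10 * n ^ 3))
    (p : Fin (2 * n) → ℝ) (hp : p ∈ stdSimplex ℝ (Fin (2 * n)))
    (hNE : ∀ i, 0 < p i → ∀ j,
      (redMatrix n k G h ε).mulVec p j ≤ (redMatrix n k G h ε).mulVec p i)
    (hsupp : ∀ i : Fin (2 * n), 0 < p i → (i : ℕ) < n) :
    k ≤ (Finset.univ.filter (fun i : Fin (2 * n) => 1 / (n : ℝ) ^ 2 < p i)).card ∧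
    (∀ i j : Fin (2 * n), 1 / (n : ℝ) ^ 2 < p i → 1 / (n : ℝ) ^ 2 < p j → i ≠ j →
      ∃ (hi : (i : ℕ) < n) (hj : (j : ℕ) < n), G.Adj ⟨i, hi⟩ ⟨j, hj⟩) ∧
    (∃ s : Finset (Fin n), G.IsNClique k s) := by
  obtain ⟨hε0, hε⟩ := hε
  have hNash : IsSymmNashEq (redMatrix n k G h ε) p := ⟨hp, hNE⟩
  have hn : (1 : ℝ) ≤ n := by exact_mod_cast (by omega : 1 ≤ n)
  have hε1 : ε ≤ 1 := hε.trans ((div_le_one (by positivity)).2 (by nlinarith))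
  have hclique : ∀ i j : Fin (2 * n), 1 / (n : ℝ) ^ 2 < p i → 1 / (n : ℝ) ^ 2 < p j →
      i ≠ j → ∃ (hi : (i : ℕ) < n) (hj : (j : ℕ) < n), G.Adj ⟨i, hi⟩ ⟨j, hj⟩ :=
    fun _ _ => hNash.adj_of_inv_sq_lt hsupp hε0.le hε1 (by linarith)
  have hcard := hNash.le_card_filter_inv_sq_lt hsupp hε0.le hε (by nlinarith) (by omega)
  refine ⟨hcard, hclique, G.exists_isNClique_of_le_card (by omega) (fun i hi => ?_)
    (fun i hi j hj => hclique i j (mem_filter.1 hi).2 (mem_filter.1 hj).2) hcard⟩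
  exact hsupp i ((by positivity : (0 : ℝ) ≤ 1 / n ^ 2).trans_lt (mem_filter.1 hi).2)

/-- if `p` is a symmetric Nash equilibrium of the reduction game `(A,A)`
with support contained in `[n]` and support size at least 2, then the strong support
`SSP(p) = {i : p_i > 1/n²}` has at least `k` elements, its vertices form a clique in `G`,
and hence `G` has a clique of size `k`. -/
theorem NE_gives_clique {n k : ℕ} (G : SimpleGraph (Fin n)) [DecidableRel G.Adj]
    (huniv : ∃ v : Fin n, ∀ u, u ≠ v → G.Adj v u)
    (hk : 1 < k) (hkn : k < n - 1)
    (h ε : ℝ) (hh : (2 * n ^ 2 + 5 : ℝ) < h)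
    (hε : 0 < ε ∧ ε ≤ 1 / (10 * n ^ 3))
    (p : Fin (2 * n) → ℝ) (hp : p ∈ stdSimplex ℝ (Fin (2 * n)))
    (hNE : ∀ i, 0 < p i → ∀ j,
      (redMatrix n k G h ε).mulVec p j ≤ (redMatrix n k G h ε).mulVec p i)
    (hsupp : ∀ i : Fin (2 * n), 0 < p i → (i : ℕ) < n)
    (hmix : 2 ≤ (Finset.univ.filter (fun i => 0 < p i)).card) :
    k ≤ (Finset.univ.filter (fun i : Fin (2 * n) => 1 / (n : ℝ) ^ 2 < p i)).card ∧
    (∀ i j : Fin (2 * n), 1 / (n : ℝ) ^ 2 < p i → 1 / (n : ℝ) ^ 2 < p j → i ≠ j →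
      ∃ (hi : (i : ℕ) < n) (hj : (j : ℕ) < n), G.Adj ⟨i, hi⟩ ⟨j, hj⟩) ∧
    (∃ s : Finset (Fin n), G.IsNClique k s) :=
  NE_gives_clique_general G hkn h ε hh hε p hp hNE hsupp
end

section
/- Let A be an n×n symmetric random matrix with the entries {A_{ij}}_{i≤j} i.i.d. from a continuous distribution, n ≥ 6. For distinct indices i, j, k, the probability that all three diagonal entries A_{ii}, A_{jj}, A_{kk} are simultaneously dominating (A_{ll} > A_{lm} for all m ≠ l, for l ∈ {i,j,k}) is at most 1/(n−3)³. -/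
/-!
Restrict the dominance condition of each row `l ∈ {i, j, k}` to the columns outside the other two
rows. The three weakened events then depend on pairwise disjoint sets of upper-triangular entries,
hence are independent, and each asks that one of `n - 2` i.i.d. entries be the strict maximum,
which by exchangeability has probability at most `1/(n - 2) ≤ 1/(n - 3)`.
-/

open MeasureTheory ProbabilityTheory Finset Function

open scoped ENNReal

section StrictMax

variable {Ω ι : Type*} {mΩ : MeasurableSpace Ω}

lemma measurableSet_forall_lt [Countable ι] {g : ι → Ω → ℝ} (hg : ∀ b, Measurable (g b))
    (a : ι) : MeasurableSet {ω | ∀ b ≠ a, g b ω < g a ω} := by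
  simp only [Set.ofPred_forall]
  exact .iInter fun b => .iInter fun _ => measurableSet_lt (hg b) (hg a)

lemma pairwise_disjoint_forall_lt (g : ι → Ω → ℝ) :
    Pairwise (Disjoint on fun a => {ω | ∀ b ≠ a, g b ω < g a ω}) :=
  fun a c hac => Set.disjoint_left.2 fun _ ha hc => (ha c hac.symm).asymm (hc a hac)

end StrictMax

namespace ProbabilityTheory

variable {Ω ι κ : Type*} {mΩ : MeasurableSpace Ω} {P : Measure Ω}

lemma iIndep.measure_biInter_eq_prod {m : ι → MeasurableSpace Ω} (h_le : ∀ i, m i ≤ mΩ)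
    (h : iIndep m P) {s : Finset κ} {C : κ → Set ι} (hC : (s : Set κ).PairwiseDisjoint C)
    {E : κ → Set Ω} (hE : ∀ k ∈ s, MeasurableSet[⨆ i ∈ C k, m i] (E k)) :
    P (⋂ k ∈ s, E k) = ∏ k ∈ s, P (E k) := by
  classical
  induction s using Finset.induction_on with
  | empty => simp [h.isProbabilityMeasure]
  | insert a s ha ih =>
    have hdisj : Disjoint (C a) (⋃ k ∈ s, C k) :=
      Set.disjoint_iUnion₂_right.2 fun k hk =>
        hC (mem_insert_self a s) (mem_insert_of_mem hk) fun hak => ha (hak ▸ hk)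
    have hmeas : MeasurableSet[⨆ i ∈ ⋃ k ∈ s, C k, m i] (⋂ k ∈ s, E k) :=
      .biInter s.countable_toSet fun k hk =>
        (biSup_mono fun _ hi => Set.mem_biUnion hk hi : (⨆ i ∈ C k, m i) ≤ _) _
          (hE k (mem_insert_of_mem hk))
    rw [set_biInter_insert, prod_insert ha, ← ih (hC.subset (by simp))
      fun k hk => hE k (mem_insert_of_mem hk)]
    exact (Indep_iff _ _ P).1 (indep_iSup_of_disjoint h_le h hdisj) _ _
      (hE a (mem_insert_self a s)) hmeas

variable [Fintype ι] {g : ι → Ω → ℝ} {μ : Measure ℝ}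

lemma iIndepFun.measure_forall_lt_eq_pi (hind : iIndepFun g P) (hg : ∀ b, Measurable (g b))
    (hdist : ∀ b, P.map (g b) = μ) (a : ι) :
    P {ω | ∀ b ≠ a, g b ω < g a ω} = Measure.pi (fun _ => μ) {v | ∀ b ≠ a, v b < v a} := by
  rw [← funext hdist, ← hind.map_fun_eq_pi_map fun b => (hg b).aemeasurable,
    Measure.map_apply (measurable_pi_lambda _ hg)
      (measurableSet_forall_lt measurable_pi_apply a)]
  rfl

lemma iIndepFun.measure_forall_lt_eq (hind : iIndepFun g P) (hg : ∀ b, Measurable (g b))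
    (hdist : ∀ b, P.map (g b) = μ) (a c : ι) :
    P {ω | ∀ b ≠ c, g b ω < g c ω} = P {ω | ∀ b ≠ a, g b ω < g a ω} := by
  classical
  -- Relabelling by the transposition of `a` and `c` preserves the i.i.d. law.
  set e := Equiv.swap a c
  have hswap : {ω | ∀ b ≠ c, g b ω < g c ω} = {ω | ∀ b ≠ a, g (e b) ω < g (e a) ω} := by
    ext ω
    simp only [Set.mem_ofPred_eq, e, Equiv.swap_apply_left]
    rw [← e.forall_congr_right]
    simp [e, Equiv.swap_apply_eq_iff]
  rw [hswap, (hind.precomp e.injective).measure_forall_lt_eq_pi (fun _ => hg _) (fun _ => hdist _),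
    hind.measure_forall_lt_eq_pi hg hdist]

theorem iIndepFun.measure_forall_lt_le_inv_card (hind : iIndepFun g P)
    (hg : ∀ b, Measurable (g b)) (hdist : ∀ b, P.map (g b) = μ) (a : ι) :
    P {ω | ∀ b ≠ a, g b ω < g a ω} ≤ (Fintype.card ι : ENNReal)⁻¹ := by
  have := hind.isProbabilityMeasure
  rw [ENNReal.le_inv_iff_mul_le]
  calc P {ω | ∀ b ≠ a, g b ω < g a ω} * Fintype.card ι
      = ∑ c, P {ω | ∀ b ≠ c, g b ω < g c ω} := by
        simp [hind.measure_forall_lt_eq hg hdist a, mul_comm]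
    _ = P (⋃ c, {ω | ∀ b ≠ c, g b ω < g c ω}) := by
        rw [measure_iUnion (pairwise_disjoint_forall_lt g) (measurableSet_forall_lt hg),
          tsum_fintype]
    _ ≤ 1 := prob_le_one

end ProbabilityTheory

section SymmetricMatrix

variable {α : Type*} [LinearOrder α]

def sortedPair (a b : α) : {p : α × α // p.1 ≤ p.2} := ⟨(min a b, max a b), min_le_max⟩

lemma eq_and_eq_or_eq_and_eq_of_sortedPair_eq {a b c d : α}
    (h : sortedPair a b = sortedPair c d) : (a = c ∧ b = d) ∨ (a = d ∧ b = c) := by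
  have hmin : min a b = min c d := congrArg (·.1.1) h
  have hmax : max a b = max c d := congrArg (·.1.2) h
  rcases le_total a b with hab | hab <;> rcases le_total c d with hcd | hcd <;>
    simp only [min_eq_left, min_eq_right, max_eq_left, max_eq_right, *] at hmin hmax <;> tauto

lemma sortedPair_injective (a : α) : Injective (sortedPair a) := fun b d h => by
  rcases eq_and_eq_or_eq_and_eq_of_sortedPair_eq h with ⟨-, rfl⟩ | ⟨rfl, rfl⟩ <;> rfl

variable {Ω : Type*} {mΩ : MeasurableSpace Ω} {P : Measure Ω} {X : α → α → Ω → ℝ}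

lemma apply_sortedPair (hXsym : ∀ a b, X a b = X b a) (a b : α) :
    X (sortedPair a b).1.1 (sortedPair a b).1.2 = X a b := by
  rcases le_total a b with h | h
  · simp [sortedPair, h]
  · simp [sortedPair, h, hXsym b a]

def diagDominatesOn (X : α → α → Ω → ℝ) (U : Finset α) (l : α) : Set Ω :=
  {ω | ∀ t ∈ U, t ≠ l → X l t ω < X l l ω}

theorem measure_diagDominatesOn_le (hXsym : ∀ a b, X a b = X b a)
    (hXmeas : ∀ a b, Measurable (X a b)) {μ : Measure ℝ}
    (hdist : ∀ a b, a ≤ b → P.map (X a b) = μ)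
    (hindep : iIndepFun (fun p : {p : α × α // p.1 ≤ p.2} => X p.1.1 p.1.2) P)
    {U : Finset α} {l : α} (hl : l ∈ U) :
    P (diagDominatesOn X U l) ≤ (#U : ℝ≥0∞)⁻¹ := by
  have hind : iIndepFun (fun t : U => X l t) P := by
    simpa only [comp_apply, apply_sortedPair hXsym] using
      hindep.precomp ((sortedPair_injective l).comp Subtype.val_injective)
  have hdist_row (t : U) : P.map (X l t) = μ := by
    rw [← apply_sortedPair hXsym]
    exact hdist _ _ (sortedPair l t).2
  have hevent : diagDominatesOn X U l = {ω | ∀ t : U, t ≠ ⟨l, hl⟩ → X l t ω < X l l ω} := by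
    ext ω
    simp [diagDominatesOn, ← Subtype.val_inj]
  rw [hevent, ← Fintype.card_coe U]
  exact hind.measure_forall_lt_le_inv_card (fun t => hXmeas l t) hdist_row ⟨l, hl⟩

lemma measurableSet_diagDominatesOn {m : MeasurableSpace Ω} {U : Finset α} {l : α}
    (hrow : ∀ t ∈ insert l U, Measurable[m] (X l t)) :
    MeasurableSet[m] (diagDominatesOn X U l) := by
  simp only [diagDominatesOn, Set.ofPred_forall]
  exact .biInter U.countable_toSet fun t ht => .iInter fun _ =>
    measurableSet_lt (hrow t (mem_insert_of_mem ht)) (hrow l (mem_insert_self l U))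

theorem measure_biInter_diagDominatesOn (hXsym : ∀ a b, X a b = X b a)
    (hXmeas : ∀ a b, Measurable (X a b))
    (hindep : iIndepFun (fun p : {p : α × α // p.1 ≤ p.2} => X p.1.1 p.1.2) P)
    {T : Finset α} {U : α → Finset α} (hU : ∀ l ∈ T, ∀ l' ∈ T, l ≠ l' → l' ∉ U l) :
    P (⋂ l ∈ T, diagDominatesOn X (U l) l) = ∏ l ∈ T, P (diagDominatesOn X (U l) l) := by
  set m := fun p : {p : α × α // p.1 ≤ p.2} => MeasurableSpace.comap (X p.1.1 p.1.2) inferInstance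
  set C := fun l => sortedPair l '' (insert l (U l) : Set α)
  -- By symmetry, an entry of row `l` in column `t` lies in row `l' ≠ l` only if `t = l'`.
  have hdisj : (T : Set α).PairwiseDisjoint C := by
    intro l hl l' hl' hne
    refine Set.disjoint_left.2 ?_
    rintro _ ⟨t, ht, rfl⟩ ⟨t', -, h⟩
    rcases eq_and_eq_or_eq_and_eq_of_sortedPair_eq h with ⟨rfl, -⟩ | ⟨rfl, -⟩
    · exact hne rfl
    · exact hU l hl l' hl' hne (by simpa [hne.symm] using ht)
  refine ((iIndepFun_iff_iIndep _ _ _).1 hindep).measure_biInter_eq_prod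
    (fun p => (hXmeas _ _).comap_le) hdisj fun l _ => measurableSet_diagDominatesOn fun t ht => ?_
  rw [← apply_sortedPair hXsym]
  exact (comap_measurable _).mono (le_biSup m (Set.mem_image_of_mem _ (by simpa using ht))) le_rfl

end SymmetricMatrix

theorem prob_three_diag_dominating_general {n : ℕ}
    {Ω : Type*} [MeasureSpace Ω]
    (X : Fin n → Fin n → Ω → ℝ)
    (hXsym : ∀ i j, X i j = X j i)
    (hXmeas : ∀ i j, Measurable (X i j))
    (μ : Measure ℝ)
    (hdist : ∀ i j : Fin n, i ≤ j → Measure.map (X i j) ℙ = μ)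
    (hindep : iIndepFun
      (fun p : {p : Fin n × Fin n // p.1 ≤ p.2} => X p.1.1 p.1.2) ℙ)
    (i j k : Fin n) (hij : i ≠ j) (hjk : j ≠ k) (hik : i ≠ k) :
    ℙ {ω | (∀ m, m ≠ i → X i m ω < X i i ω) ∧ (∀ m, m ≠ j → X j m ω < X j j ω) ∧
        (∀ m, m ≠ k → X k m ω < X k k ω)} ≤ (((n - 3 : ℕ) : ENNReal))⁻¹ ^ 3 := by
  classical
  set T : Finset (Fin n) := {i, j, k}
  have hT : #T = 3 := card_eq_three.2 ⟨i, j, k, hij, hik, hjk, rfl⟩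
  have hrow (l) (hl : l ∈ T) :
      ℙ (diagDominatesOn X (T.erase l)ᶜ l) ≤ ((n - 3 : ℕ) : ℝ≥0∞)⁻¹ := by
    refine (measure_diagDominatesOn_le hXsym hXmeas hdist hindep (by simp)).trans ?_
    rw [card_compl, card_erase_of_mem hl, hT, Fintype.card_fin]
    exact ENNReal.inv_le_inv.2 (by exact_mod_cast (by omega))
  calc _ ≤ ℙ (⋂ l ∈ T, diagDominatesOn X (T.erase l)ᶜ l) := measure_mono <| by
        rintro ω ⟨hi, hj, hk⟩
        simp only [Set.mem_iInter]
        intro l hl t _ htl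
        simp only [T, mem_insert, mem_singleton] at hl
        rcases hl with rfl | rfl | rfl
        exacts [hi t htl, hj t htl, hk t htl]
    _ = ∏ l ∈ T, ℙ (diagDominatesOn X (T.erase l)ᶜ l) :=
        measure_biInter_diagDominatesOn hXsym hXmeas hindep fun l _ l' hl' hne => by
          simp [hl', hne.symm]
    _ ≤ ∏ _l ∈ T, ((n - 3 : ℕ) : ℝ≥0∞)⁻¹ := prod_le_prod' hrow
    _ = _ := by rw [prod_const, hT]

/-- for a random symmetric `n×n` matrix (`n ≥ 6`) with i.i.d. atomless
upper-triangular entries, and distinct indices `i, j, k`, the probability that the three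
diagonal entries `A_{ii}, A_{jj}, A_{kk}` are simultaneously dominating is at most
`1/(n−3)³`. -/
theorem prob_three_diag_dominating {n : ℕ} (hn : 6 ≤ n)
    {Ω : Type*} [MeasureSpace Ω] [IsProbabilityMeasure (ℙ : Measure Ω)]
    (X : Fin n → Fin n → Ω → ℝ)
    (hXsym : ∀ i j, X i j = X j i)
    (hXmeas : ∀ i j, Measurable (X i j))
    (μ : Measure ℝ) [IsProbabilityMeasure μ]
    (hatomless : ∀ r : ℝ, μ {r} = 0)
    (hdist : ∀ i j : Fin n, i ≤ j → Measure.map (X i j) ℙ = μ)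
    (hindep : iIndepFun
      (fun p : {p : Fin n × Fin n // p.1 ≤ p.2} => X p.1.1 p.1.2) ℙ)
    (i j k : Fin n) (hij : i ≠ j) (hjk : j ≠ k) (hik : i ≠ k) :
    ℙ {ω | (∀ m, m ≠ i → X i m ω < X i i ω) ∧ (∀ m, m ≠ j → X j m ω < X j j ω) ∧
        (∀ m, m ≠ k → X k m ω < X k k ω)} ≤ (((n - 3 : ℕ) : ENNReal))⁻¹ ^ 3 :=
  prob_three_diag_dominating_general X hXsym hXmeas μ hdist hindep i j k hij hjk hik
end
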